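/- For all real parameters α > 0 and β > 0 and every symmetric 2×2 real matrix ε with ‖ε‖ < 1/β, one has F(Ψ(‖ε‖) · ε) = ε, where F(T) := (1 + (β‖T‖)^α)^{-1/α} · T and Ψ(s) := (1 − (βs)^α)^{-1/α}; hence F is a bijection from the symmetric 2×2 matrices onto the open Frobenius-norm ball of radius 1/β in the symmetric matrices, with inverse ε ↦ Ψ(‖ε‖) ε. -/

import Mathlib

/-!
`F` and `ε ↦ Ψ(‖ε‖) ε` both rescale their argument by a positive scalar, so everything reduces to
the scalar maps `u ↦ (1 + u^α)^{-1/α} u` on `[0, ∞)` and `u ↦ (1 - u^α)^{-1/α} u` on `[0, 1)`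
(with `u = β‖·‖`). Both satisfy `(p^{-1/α} u)^α = u^α / p`, and since `1 + u^α / (1 - u^α)` and
`1 - u^α / (1 + u^α)` are the reciprocals of `1 - u^α` and `1 + u^α`, the two scalar factors
multiply to `1`: the maps are mutually inverse, and the first one takes values below `1`.
-/

/-- The Frobenius inner product `A : B = ∑ᵢⱼ Aᵢⱼ Bᵢⱼ` on 2×2 real matrices. -/
noncomputable def frobInner (A B : Matrix (Fin 2) (Fin 2) ℝ) : ℝ :=
  ∑ i, ∑ j, A i j * B i j

/-- The Frobenius norm `‖A‖ = √(A : A)`. -/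
noncomputable def frobNorm (A : Matrix (Fin 2) (Fin 2) ℝ) : ℝ :=
  Real.sqrt (frobInner A A)

/-- The strain-limiting response function `F(T) = (1 + (β‖T‖)^α)^{-1/α} • T`. -/
noncomputable def slResponse (α β : ℝ) (T : Matrix (Fin 2) (Fin 2) ℝ) :
    Matrix (Fin 2) (Fin 2) ℝ :=
  ((1 + (β * frobNorm T) ^ α) ^ (-(1 / α))) • T

/-- The hyperelastic inversion factor `Ψ(s) = (1 − (βs)^α)^{-1/α}`. -/
noncomputable def Psi (α β s : ℝ) : ℝ :=
  (1 - (β * s) ^ α) ^ (-(1 / α))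

lemma frobNorm_nonneg (A : Matrix (Fin 2) (Fin 2) ℝ) : 0 ≤ frobNorm A :=
  Real.sqrt_nonneg _

lemma frobNorm_smul {c : ℝ} (hc : 0 ≤ c) (A : Matrix (Fin 2) (Fin 2) ℝ) :
    frobNorm (c • A) = c * frobNorm A := by
  have h : frobInner (c • A) (c • A) = c ^ 2 * frobInner A A := by
    simp only [frobInner, Matrix.smul_apply, smul_eq_mul, Fin.sum_univ_two]
    ring
  rw [frobNorm, h, Real.sqrt_mul (sq_nonneg c), Real.sqrt_sq hc, frobNorm]

noncomputable def responseFactor (α β s : ℝ) : ℝ :=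
  (1 + (β * s) ^ α) ^ (-(1 / α))

lemma slResponse_eq_responseFactor_smul (α β : ℝ) (T : Matrix (Fin 2) (Fin 2) ℝ) :
    slResponse α β T = responseFactor α β (frobNorm T) • T :=
  rfl

section Scalar

variable {α β s : ℝ}

lemma rpow_neg_inv_mul_rpow (hα : α ≠ 0) {p u : ℝ} (hp : 0 < p) (hu : 0 ≤ u) :
    (p ^ (-(1 / α)) * u) ^ α = u ^ α / p := by
  rw [Real.mul_rpow (by positivity) hu, ← Real.rpow_mul hp.le,
    show -(1 / α) * α = -1 by field_simp, Real.rpow_neg_one, inv_mul_eq_div]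

lemma responseFactor_pos (hs : 0 ≤ β * s) : 0 < responseFactor α β s := by
  unfold responseFactor
  positivity

lemma Psi_pos (hs : 0 < 1 - (β * s) ^ α) : 0 < Psi α β s :=
  Real.rpow_pos_of_pos hs _

lemma responseFactor_Psi_mul_mul_Psi (hα : α ≠ 0) (hs : 0 ≤ β * s)
    (hp : 0 < 1 - (β * s) ^ α) :
    responseFactor α β (Psi α β s * s) * Psi α β s = 1 := by
  have hpow : (β * (Psi α β s * s)) ^ α = (β * s) ^ α / (1 - (β * s) ^ α) := by
    rw [mul_left_comm, Psi, rpow_neg_inv_mul_rpow hα hp hs]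
  have hsum : 1 + (β * s) ^ α / (1 - (β * s) ^ α) = (1 - (β * s) ^ α)⁻¹ := by
    field_simp
    ring
  rw [responseFactor, hpow, hsum, Real.inv_rpow hp.le, Psi, inv_mul_cancel₀ (by positivity)]

lemma Psi_responseFactor_mul_mul_responseFactor (hα : α ≠ 0) (hs : 0 ≤ β * s) :
    Psi α β (responseFactor α β s * s) * responseFactor α β s = 1 := by
  have hq : 0 < 1 + (β * s) ^ α := by positivity
  have hpow : (β * (responseFactor α β s * s)) ^ α = (β * s) ^ α / (1 + (β * s) ^ α) := by
    rw [mul_left_comm, responseFactor, rpow_neg_inv_mul_rpow hα hq hs]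
  have hdiff : 1 - (β * s) ^ α / (1 + (β * s) ^ α) = (1 + (β * s) ^ α)⁻¹ := by
    field_simp
    ring
  rw [Psi, hpow, hdiff, Real.inv_rpow hq.le, responseFactor, inv_mul_cancel₀ (by positivity)]

lemma mul_responseFactor_mul_lt_one (hα : 0 < α) (hs : 0 ≤ β * s) :
    β * (responseFactor α β s * s) < 1 := by
  have hq : 0 < 1 + (β * s) ^ α := by positivity
  have hx : 0 ≤ β * (responseFactor α β s * s) := by
    rw [mul_left_comm]
    exact mul_nonneg (responseFactor_pos hs).le hs
  have hpow : (β * (responseFactor α β s * s)) ^ α < 1 ^ α := by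
    rw [mul_left_comm, responseFactor, rpow_neg_inv_mul_rpow hα.ne' hq hs, Real.one_rpow,
      div_lt_one hq]
    linarith
  exact (Real.rpow_lt_rpow_iff hx zero_le_one hα).1 hpow

end Scalar

section Inversion

variable {α β : ℝ}

lemma slResponse_Psi_smul (hα : 0 < α) (hβ : 0 < β) {ε : Matrix (Fin 2) (Fin 2) ℝ}
    (hε : frobNorm ε < 1 / β) :
    slResponse α β (Psi α β (frobNorm ε) • ε) = ε := by
  have hs : 0 ≤ β * frobNorm ε := mul_nonneg hβ.le (frobNorm_nonneg ε)
  have hp : 0 < 1 - (β * frobNorm ε) ^ α := by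
    have hlt : β * frobNorm ε < 1 := by rwa [lt_div_iff₀' hβ] at hε
    linarith [Real.rpow_lt_one hs hlt hα]
  rw [slResponse_eq_responseFactor_smul, frobNorm_smul (Psi_pos hp).le, smul_smul,
    responseFactor_Psi_mul_mul_Psi hα.ne' hs hp, one_smul]

lemma Psi_smul_slResponse (hα : α ≠ 0) (hβ : 0 ≤ β) (T : Matrix (Fin 2) (Fin 2) ℝ) :
    Psi α β (frobNorm (slResponse α β T)) • slResponse α β T = T := by
  have hs : 0 ≤ β * frobNorm T := mul_nonneg hβ (frobNorm_nonneg T)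
  rw [slResponse_eq_responseFactor_smul, frobNorm_smul (responseFactor_pos hs).le, smul_smul,
    Psi_responseFactor_mul_mul_responseFactor hα hs, one_smul]

lemma frobNorm_slResponse_lt (hα : 0 < α) (hβ : 0 < β) (T : Matrix (Fin 2) (Fin 2) ℝ) :
    frobNorm (slResponse α β T) < 1 / β := by
  have hs : 0 ≤ β * frobNorm T := mul_nonneg hβ.le (frobNorm_nonneg T)
  rw [slResponse_eq_responseFactor_smul, frobNorm_smul (responseFactor_pos hs).le,
    lt_div_iff₀' hβ]
  exact mul_responseFactor_mul_lt_one hα hs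

end Inversion

theorem stmt_11 (α β : ℝ) (hα : 0 < α) (hβ : 0 < β) :
    (∀ ε : Matrix (Fin 2) (Fin 2) ℝ, ε.IsSymm → frobNorm ε < 1 / β →
        slResponse α β (Psi α β (frobNorm ε) • ε) = ε) ∧
      Set.BijOn (slResponse α β) {T : Matrix (Fin 2) (Fin 2) ℝ | T.IsSymm}
        {ε : Matrix (Fin 2) (Fin 2) ℝ | ε.IsSymm ∧ frobNorm ε < 1 / β} := by
  have hinv : Set.InvOn (fun ε => Psi α β (frobNorm ε) • ε) (slResponse α β)
      {T | T.IsSymm} {ε | ε.IsSymm ∧ frobNorm ε < 1 / β} :=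
    ⟨fun T _ => Psi_smul_slResponse hα.ne' hβ.le T,
      fun ε hε => slResponse_Psi_smul hα hβ hε.2⟩
  refine ⟨fun ε _ hε => slResponse_Psi_smul hα hβ hε, hinv.bijOn ?_ ?_⟩
  · exact fun T hT => ⟨hT.smul _, frobNorm_slResponse_lt hα hβ T⟩
  · exact fun ε hε => hε.1.smul _
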